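/- Let q > 3 be a prime power and let m be a positive integer. The minimum distance of the toric code associated with the order polytope of the ordinal sum A_m ⊕ A_m of two m-element antichains is d(C_{O_{A_m ⊕ A_m}}) = (q−1)^m (q−2)^m. -/

import Mathlib

open Finset

/-- A subset `W` of `α` is an upper order ideal with respect to the order relation `le`
if it is upward closed. -/
def IsUpperIdeal {α : Type*} (le : α → α → Prop) (W : Set α) : Prop :=
  ∀ ⦃x⦄, x ∈ W → ∀ ⦃y⦄, le x y → y ∈ W

/-- The space `L_P` of sections: the `F`-span of the monomials `∏_{i ∈ W} x_i`,
where `W` ranges over the upper order ideals of the poset `(α, le)`. -/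
def monomialSpan (α : Type*) [Fintype α] (le : α → α → Prop)
    (F : Type*) [Field F] : Submodule F ((α → Fˣ) → F) :=
  Submodule.span F {g : (α → Fˣ) → F |
    ∃ W : Finset α, (∀ x ∈ W, ∀ y, le x y → y ∈ W) ∧
      g = fun x => ∏ i ∈ W, (x i : F)}

/-- The minimum distance of the toric code of the order polytope of the poset `(α, le)`
over the finite field `F`:  `(q-1)^m - max { Z(f) : f ∈ L_P, f ≠ 0 }`. -/
noncomputable def toricMinDist (α : Type*) [Fintype α] (le : α → α → Prop)
    (F : Type*) [Field F] [Fintype F] : ℕ :=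
  (Fintype.card F - 1) ^ Fintype.card α -
    sSup {n : ℕ | ∃ g ∈ monomialSpan α le F, g ≠ 0 ∧
      n = Nat.card {x : α → Fˣ // g x = 0}}

/-- The order relation of the ordinal sum `A_m ⊕ A_m` of two `m`-element antichains,
on `Fin (2*m)`: the first `m` elements form an antichain lying below the antichain formed by
the last `m` elements. -/
def amamLE (m : ℕ) : Fin (2 * m) → Fin (2 * m) → Prop :=
  fun a b => a = b ∨ (a.val < m ∧ m ≤ b.val)

/-!
An upper ideal of `A_m ⊕ A_m` either lies in the top antichain `T` or contains all of it, so every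
codeword has the form `f = G + H · x^T` with `G` multilinear in the top variables and `H`
multilinear in the bottom ones. A nonzero multilinear function of `s` of the `n` torus variables
has at least `(q-2)^s (q-1)^(n-s)` nonzeros: write it as `g + x_a h`; at most one value of `x_a`
makes the slice vanish, and each other slice is counted by induction. If `G + c · x^T ≠ 0` for
every constant `c`, then every choice of the bottom variables leaves such a nonzero function of the
`m` top variables; otherwise `f = (H - c) · x^T` and the bound applies to `H - c`. The codeword
`∏_{j ∈ T} (x_j - 1)` attains `(q-2)^m (q-1)^m`.
-/

section Slicing
variable {α β : Type*} [DecidableEq α] [Fintype α] [Fintype β]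

lemma card_mul_card_eq_sum_card_slices {p : (α → β) → Prop} (a : α)
    (ps : β → (α → β) → Prop) (hps : ∀ t, DependsOn (ps t) {a}ᶜ)
    (hp : ∀ x, p x ↔ ps (x a) x) :
    Fintype.card β * Nat.card {x // p x} = ∑ t, Nat.card {x // ps t x} := by
  have hupd (x : α → β) (t : β) : ∀ i ∈ ({a}ᶜ : Set α), Function.update x a t i = x i :=
    fun i hi => Function.update_of_ne hi _ _
  -- overwriting the `a`-coordinate moves between the slices
  let e : (Σ t, {x // ps t x}) ≃ β × {x // p x} :=
    { toFun := fun tx => (tx.2.1 a, ⟨Function.update tx.2.1 a tx.1, by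
        rw [hp, Function.update_self, hps _ (hupd _ _)]; exact tx.2.2⟩)
      invFun := fun by_ => ⟨by_.2.1 a, Function.update by_.2.1 a by_.1, by
        rw [hps _ (hupd _ _), ← hp]; exact by_.2.2⟩
      left_inv := fun ⟨t, x, hx⟩ => Sigma.subtype_ext (by simp) (by simp)
      right_inv := by rintro ⟨b, y, hy⟩; simp }
  rw [← Nat.card_sigma, Nat.card_congr e, Nat.card_prod, Nat.card_eq_fintype_card (α := β)]

end Slicing

section Multilinear
variable {α : Type*} {F : Type*} [Field F]

variable (F) in
def multilinSpan (s : Finset α) : Submodule F ((α → Fˣ) → F) :=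
  Submodule.span F {g | ∃ S ⊆ s, g = fun x => ∏ i ∈ S, (x i : F)}

lemma monomial_mem_multilinSpan {S s : Finset α} (h : S ⊆ s) :
    (fun x : α → Fˣ => ∏ i ∈ S, (x i : F)) ∈ multilinSpan F s :=
  Submodule.subset_span ⟨S, h, rfl⟩

lemma const_mem_multilinSpan (c : F) (s : Finset α) :
    (fun _ : α → Fˣ => c) ∈ multilinSpan F s := by
  convert Submodule.smul_mem _ c (monomial_mem_multilinSpan (F := F) s.empty_subset) using 1
  funext x
  simp

lemma dependsOn_of_mem_multilinSpan {s : Finset α} {f : (α → Fˣ) → F}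
    (hf : f ∈ multilinSpan F s) : DependsOn f s := by
  induction hf using Submodule.span_induction with
  | mem g hg =>
    obtain ⟨S, hS, rfl⟩ := hg
    exact fun x y hxy => Finset.prod_congr rfl fun i hi => by rw [hxy i (hS hi)]
  | zero => exact fun _ _ _ => rfl
  | add g h _ _ hg hh => exact fun x y hxy => by simp [hg hxy, hh hxy]
  | smul c g _ hg => exact fun x y hxy => by simp [hg hxy]

lemma prod_sub_one_mem_multilinSpan [DecidableEq α] (s : Finset α) :
    (fun x : α → Fˣ => ∏ j ∈ s, ((x j : F) - 1)) ∈ multilinSpan F s := by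
  have h : (fun x : α → Fˣ => ∏ j ∈ s, ((x j : F) - 1)) =
      ∑ S ∈ s.powerset,
        (-1 : F) ^ #(s \ S) • fun x : α → Fˣ => ∏ i ∈ S, (x i : F) := by
    funext x
    simp [sub_eq_add_neg, Finset.prod_add, Finset.sum_apply, mul_comm]
  rw [h]
  exact Submodule.sum_mem _ fun S hS =>
    Submodule.smul_mem _ _ (monomial_mem_multilinSpan (Finset.mem_powerset.mp hS))

lemma exists_eq_add_mul_of_mem_multilinSpan_insert [DecidableEq α] {s : Finset α} {a : α}
    {f : (α → Fˣ) → F} (hf : f ∈ multilinSpan F (insert a s)) :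
    ∃ g ∈ multilinSpan F s, ∃ h ∈ multilinSpan F s, f = fun x => g x + (x a : F) * h x := by
  induction hf using Submodule.span_induction with
  | mem f hf =>
    obtain ⟨S, hS, rfl⟩ := hf
    by_cases haS : a ∈ S
    · refine ⟨0, zero_mem _, _, monomial_mem_multilinSpan (S := S.erase a) ?_, ?_⟩
      · simpa using Finset.erase_subset_erase a hS |>.trans (Finset.erase_insert_subset a s)
      · funext x
        simpa using (Finset.mul_prod_erase S (fun i => (x i : F)) haS).symm
    · exact ⟨_, monomial_mem_multilinSpan ((Finset.subset_insert_iff_of_notMem haS).mp hS),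
        0, zero_mem _, by simp⟩
  | zero => exact ⟨0, zero_mem _, 0, zero_mem _, by funext x; simp⟩
  | add f₁ f₂ _ _ ih₁ ih₂ =>
    obtain ⟨g₁, hg₁, h₁, hh₁, rfl⟩ := ih₁
    obtain ⟨g₂, hg₂, h₂, hh₂, rfl⟩ := ih₂
    exact ⟨g₁ + g₂, add_mem hg₁ hg₂, h₁ + h₂, add_mem hh₁ hh₂,
      by funext x; simp; ring⟩
  | smul c f _ ih =>
    obtain ⟨g, hg, h, hh, rfl⟩ := ih
    exact ⟨c • g, Submodule.smul_mem _ _ hg, c • h, Submodule.smul_mem _ _ hh,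
      by funext x; simp; ring⟩

end Multilinear

lemma Set.subsingleton_setOf_add_smul_eq_zero {K V : Type*} [Field K] [AddCommGroup V]
    [Module K V] {g h : V} (hgh : g ≠ 0 ∨ h ≠ 0) :
    {c : K | g + c • h = 0}.Subsingleton := by
  intro c₁ hc₁ c₂ hc₂
  by_contra hne
  have hh : h = 0 := by
    have : (c₁ - c₂) • h = 0 := by
      rw [sub_smul, ← add_sub_add_left_eq_sub (c₁ • h) (c₂ • h) g,
        Set.mem_ofPred.mp hc₁, Set.mem_ofPred.mp hc₂, sub_zero]
    exact (smul_eq_zero.mp this).resolve_left (sub_ne_zero.mpr hne)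
  have hg : g = 0 := by simpa [hh] using hc₁
  exact hgh.elim (· hg) (· hh)

lemma card_units_sub_one_le_card_add_smul_ne_zero {F V : Type*} [Field F] [Fintype F]
    [DecidableEq F] [AddCommGroup V] [Module F V] [DecidableEq V] {g h : V}
    (hgh : g ≠ 0 ∨ h ≠ 0) :
    Fintype.card Fˣ - 1 ≤ #{t : Fˣ | g + (t : F) • h ≠ 0} := by
  have hbad : #{t : Fˣ | g + (t : F) • h = 0} ≤ 1 :=
    Finset.card_le_one.mpr fun t₁ ht₁ t₂ ht₂ => Units.ext <|
      Set.subsingleton_setOf_add_smul_eq_zero hgh (Finset.mem_filter.mp ht₁).2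
        (Finset.mem_filter.mp ht₂).2
  have := Finset.card_filter_add_card_filter_not (s := Finset.univ)
    (fun t : Fˣ => g + (t : F) • h = 0)
  rw [Finset.card_univ] at this
  simp only [ne_eq]
  omega

section Counting
variable {α : Type*} [Fintype α] [DecidableEq α]
variable {F : Type*} [Field F] [Fintype F] [DecidableEq F]

lemma le_card_ne_zero_of_mem_multilinSpan {s : Finset α} {f : (α → Fˣ) → F}
    (hf : f ∈ multilinSpan F s) (hf0 : f ≠ 0) :
    (Fintype.card Fˣ - 1) ^ #s * Fintype.card Fˣ ^ (Fintype.card α - #s)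
      ≤ Nat.card {x // f x ≠ 0} := by
  induction s using Finset.induction_on generalizing f with
  | empty =>
    have hf' : DependsOn f ∅ := by simpa using dependsOn_of_mem_multilinSpan hf
    have hconst (x : α → Fˣ) : f x = f 1 := hf'.empty x 1
    have h1 : f 1 ≠ 0 := fun h => hf0 (funext fun x => by rw [hconst x, h]; rfl)
    simp [hconst, h1, Nat.card_eq_fintype_card]
  | insert a s ha ih =>
    classical
    obtain ⟨g, hg, h, hh, rfl⟩ := exists_eq_add_mul_of_mem_multilinSpan_insert hf
    set k := Fintype.card Fˣ
    have hsa : (s : Set α) ⊆ {a}ᶜ := Set.subset_compl_singleton_iff.mpr ha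
    have hslices := card_mul_card_eq_sum_card_slices a (fun (t : Fˣ) x => g x + t * h x ≠ 0)
      (fun t x y hxy => by
        dsimp only
        rw [(dependsOn_of_mem_multilinSpan hg).mono hsa hxy,
          (dependsOn_of_mem_multilinSpan hh).mono hsa hxy])
      (fun x => Iff.rfl)
    have hgh : g ≠ 0 ∨ h ≠ 0 := by
      by_contra! hgh
      exact hf0 (funext fun x => by simp [hgh.1, hgh.2])
    have hgood := card_units_sub_one_le_card_add_smul_ne_zero (F := F) hgh
    have hslice_le (t : Fˣ) (ht : g + (t : F) • h ≠ 0) :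
        (k - 1) ^ #s * k ^ (Fintype.card α - #s) ≤ Nat.card {x // g x + t * h x ≠ 0} :=
      ih (add_mem hg (Submodule.smul_mem _ _ hh)) ht
    have hn : Fintype.card α - #s = Fintype.card α - (#s + 1) + 1 := by
      have := Finset.card_le_univ (insert a s)
      rw [Finset.card_insert_of_notMem ha] at this
      omega
    rw [Finset.card_insert_of_notMem ha]
    refine Nat.le_of_mul_le_mul_left ?_ (Fintype.card_pos (α := Fˣ))
    calc k * ((k - 1) ^ (#s + 1) * k ^ (Fintype.card α - (#s + 1)))
        = (k - 1) * ((k - 1) ^ #s * k ^ (Fintype.card α - #s)) := by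
          rw [hn]; ring
      _ ≤ #{t : Fˣ | g + (t : F) • h ≠ 0} * ((k - 1) ^ #s * k ^ (Fintype.card α - #s)) :=
          Nat.mul_le_mul_right _ hgood
      _ ≤ ∑ t ∈ {t : Fˣ | g + (t : F) • h ≠ 0}, Nat.card {x // g x + t * h x ≠ 0} := by
          rw [← smul_eq_mul, ← Finset.sum_const]
          exact Finset.sum_le_sum fun t ht => hslice_le t (Finset.mem_filter.mp ht).2
      _ ≤ ∑ t : Fˣ, Nat.card {x // g x + t * h x ≠ 0} :=
          Finset.sum_le_sum_of_subset (Finset.subset_univ _)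
      _ = k * Nat.card {x // g x + x a * h x ≠ 0} := hslices.symm

lemma le_card_add_mul_ne_zero {s : Finset α} {G Y : (α → Fˣ) → F} {N : ℕ}
    (hG : DependsOn G (↑s)ᶜ) (hY : DependsOn Y (↑s)ᶜ)
    (hN : ∀ c : F, N ≤ Nat.card {x // G x + c * Y x ≠ 0}) {H : (α → Fˣ) → F}
    (hH : H ∈ multilinSpan F s) : N ≤ Nat.card {x // G x + H x * Y x ≠ 0} := by
  induction s using Finset.induction_on generalizing H with
  | empty =>
    have hH' : DependsOn H ∅ := by simpa using dependsOn_of_mem_multilinSpan hH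
    rw [show H = fun _ => H 1 from funext fun x => hH'.empty x 1]
    exact hN (H 1)
  | insert a s ha ih =>
    obtain ⟨H₀, hH₀, H₁, hH₁, rfl⟩ := exists_eq_add_mul_of_mem_multilinSpan_insert hH
    have hsa : (s : Set α) ⊆ {a}ᶜ := Set.subset_compl_singleton_iff.mpr ha
    have hcompl : ((insert a s : Finset α) : Set α)ᶜ ⊆ {a}ᶜ ∩ (↑s)ᶜ := by
      intro i; simp +contextual
    have hslices := card_mul_card_eq_sum_card_slices a
      (fun (v : Fˣ) x => G x + (H₀ x + v * H₁ x) * Y x ≠ 0)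
      (fun v x y hxy => by
        dsimp only
        rw [hG.mono (hcompl.trans Set.inter_subset_left) hxy,
          hY.mono (hcompl.trans Set.inter_subset_left) hxy,
          (dependsOn_of_mem_multilinSpan hH₀).mono hsa hxy,
          (dependsOn_of_mem_multilinSpan hH₁).mono hsa hxy])
      (fun x => Iff.rfl)
    have hslice_le (v : Fˣ) : N ≤ Nat.card {x // G x + (H₀ x + v * H₁ x) * Y x ≠ 0} :=
      ih (hG.mono (hcompl.trans Set.inter_subset_right))
        (hY.mono (hcompl.trans Set.inter_subset_right))
        (H := H₀ + (v : F) • H₁) (add_mem hH₀ (Submodule.smul_mem _ _ hH₁))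
    refine Nat.le_of_mul_le_mul_left ?_ (Fintype.card_pos (α := Fˣ))
    rw [hslices, ← Finset.card_univ, ← smul_eq_mul]
    exact Finset.card_nsmul_le_sum _ _ N fun v _ => hslice_le v

lemma card_prod_sub_one_ne_zero (s : Finset α) :
    Nat.card {x : α → Fˣ // ∏ j ∈ s, ((x j : F) - 1) ≠ 0}
      = (Fintype.card Fˣ - 1) ^ #s * Fintype.card Fˣ ^ (Fintype.card α - #s) := by
  have hset : ({x : α → Fˣ | ∏ j ∈ s, ((x j : F) - 1) ≠ 0} : Finset _) =
      Fintype.piFinset fun j => if j ∈ s then Finset.univ.erase (1 : Fˣ) else Finset.univ := by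
    ext x
    simp only [Finset.mem_filter, Finset.mem_univ, true_and, Finset.prod_ne_zero_iff,
      sub_ne_zero, ne_eq, Units.val_eq_one, Fintype.mem_piFinset]
    refine forall_congr' fun j => ?_
    split_ifs <;> simp [*]
  rw [Nat.card_eq_fintype_card, Fintype.card_subtype, hset, Fintype.card_piFinset]
  simp only [apply_ite Finset.card, Finset.prod_ite, Finset.prod_const]
  simp [Finset.filter_notMem_eq_sdiff, Finset.card_univ_sdiff]

end Counting

section ToricCode
variable (α : Type*) [Fintype α] (le : α → α → Prop) (F : Type*) [Field F] [Fintype F]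

def toricWeights : Set ℕ :=
  {n | ∃ g ∈ monomialSpan α le F, g ≠ 0 ∧ n = Nat.card {x // g x ≠ 0}}

variable {α le F}

lemma card_eq_zero_add_card_ne_zero [DecidableEq F] (g : (α → Fˣ) → F) :
    Nat.card {x // g x = 0} + Nat.card {x // g x ≠ 0} = Fintype.card Fˣ ^ Fintype.card α := by
  classical
  rw [Nat.card_eq_fintype_card, Nat.card_eq_fintype_card, Fintype.card_subtype_compl,
    Nat.add_sub_of_le (Fintype.card_subtype_le _), Fintype.card_fun]

lemma toricMinDist_eq_of_isLeast {D : ℕ} (hD : IsLeast (toricWeights α le F) D) :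
    toricMinDist α le F = D := by
  classical
  set N := Fintype.card Fˣ ^ Fintype.card α
  obtain ⟨⟨g₀, hg₀, hg₀0, rfl⟩, hmin⟩ := hD
  have hsplit := card_eq_zero_add_card_ne_zero (F := F) (α := α)
  have hmax : IsGreatest {n | ∃ g ∈ monomialSpan α le F, g ≠ 0 ∧
      n = Nat.card {x // g x = 0}} (N - Nat.card {x // g₀ x ≠ 0}) := by
    refine ⟨⟨g₀, hg₀, hg₀0, by have := hsplit g₀; omega⟩, ?_⟩
    rintro _ ⟨g, hg, hg0, rfl⟩
    have := hsplit g
    have := hmin ⟨g, hg, hg0, rfl⟩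
    omega
  rw [toricMinDist, hmax.csSup_eq, ← Fintype.card_units]
  have := hsplit g₀
  omega

end ToricCode

section OrdinalSumAntichains
variable {F : Type*} [Field F] (m : ℕ)

def amamBottom : Finset (Fin (2 * m)) := {i | (i : ℕ) < m}

variable {m}

lemma mem_amamBottom {i : Fin (2 * m)} : i ∈ amamBottom m ↔ (i : ℕ) < m := by
  simp [amamBottom]

variable (m) in
lemma card_amamBottom : #(amamBottom m) = m := by
  simp only [amamBottom, Fin.card_filter_val_lt]
  omega

variable (m) in
lemma card_compl_amamBottom : #(amamBottom m)ᶜ = m := by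
  rw [Finset.card_compl, Fintype.card_fin, card_amamBottom]
  omega

variable (F m) in
lemma multilinSpan_compl_amamBottom_le :
    multilinSpan F (amamBottom m)ᶜ ≤ monomialSpan (Fin (2 * m)) (amamLE m) F := by
  refine Submodule.span_le.mpr ?_
  rintro _ ⟨S, hS, rfl⟩
  refine Submodule.subset_span ⟨S, fun i hi j hij => ?_, rfl⟩
  rcases hij with rfl | ⟨hi', _⟩
  · exact hi
  · exact absurd (mem_amamBottom.mpr hi') (Finset.mem_compl.mp (hS hi))

lemma exists_eq_add_mul_of_mem_monomialSpan_amamLE {f : (Fin (2 * m) → Fˣ) → F}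
    (hf : f ∈ monomialSpan (Fin (2 * m)) (amamLE m) F) :
    ∃ G ∈ multilinSpan F (amamBottom m)ᶜ, ∃ H ∈ multilinSpan F (amamBottom m),
      f = fun x => G x + H x * ∏ j ∈ (amamBottom m)ᶜ, (x j : F) := by
  induction hf using Submodule.span_induction with
  | mem f hf =>
    obtain ⟨W, hW, rfl⟩ := hf
    by_cases hWtop : W ⊆ (amamBottom m)ᶜ
    · exact ⟨_, monomial_mem_multilinSpan hWtop, 0, zero_mem _, by funext x; simp⟩
    · obtain ⟨b, hbW, hb⟩ := Finset.not_subset.mp hWtop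
      have hb' : (b : ℕ) < m := mem_amamBottom.mp (Finset.mem_compl.not_left.mp hb)
      have htop : (amamBottom m)ᶜ ⊆ W := fun j hj =>
        hW b hbW j (Or.inr ⟨hb', not_lt.mp (mem_amamBottom.not.mp (Finset.mem_compl.mp hj))⟩)
      refine ⟨0, zero_mem _, _, monomial_mem_multilinSpan (S := W \ (amamBottom m)ᶜ)
        (fun i hi => by simpa using (Finset.mem_sdiff.mp hi).2), ?_⟩
      funext x
      simpa using (Finset.prod_sdiff htop).symm
  | zero => exact ⟨0, zero_mem _, 0, zero_mem _, by funext x; simp⟩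
  | add f₁ f₂ _ _ ih₁ ih₂ =>
    obtain ⟨G₁, hG₁, H₁, hH₁, rfl⟩ := ih₁
    obtain ⟨G₂, hG₂, H₂, hH₂, rfl⟩ := ih₂
    exact ⟨G₁ + G₂, add_mem hG₁ hG₂, H₁ + H₂, add_mem hH₁ hH₂,
      by funext x; simp; ring⟩
  | smul c f _ ih =>
    obtain ⟨G, hG, H, hH, rfl⟩ := ih
    exact ⟨c • G, Submodule.smul_mem _ _ hG, c • H, Submodule.smul_mem _ _ hH,
      by funext x; simp; ring⟩

variable [Fintype F] [DecidableEq F]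

lemma le_card_ne_zero_of_mem_monomialSpan_amamLE {f : (Fin (2 * m) → Fˣ) → F}
    (hf : f ∈ monomialSpan (Fin (2 * m)) (amamLE m) F) (hf0 : f ≠ 0) :
    (Fintype.card Fˣ - 1) ^ m * Fintype.card Fˣ ^ m ≤ Nat.card {x // f x ≠ 0} := by
  obtain ⟨G, hG, H, hH, rfl⟩ := exists_eq_add_mul_of_mem_monomialSpan_amamLE hf
  set Y := fun x : Fin (2 * m) → Fˣ => ∏ j ∈ (amamBottom m)ᶜ, (x j : F)
  have hY : Y ∈ multilinSpan F (amamBottom m)ᶜ := monomial_mem_multilinSpan subset_rfl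
  have hY0 (x : Fin (2 * m) → Fˣ) : Y x ≠ 0 :=
    Finset.prod_ne_zero_iff.mpr fun j _ => Units.ne_zero _
  have hsub : Fintype.card (Fin (2 * m)) - m = m := by rw [Fintype.card_fin]; omega
  by_cases hdeg : ∃ c : F, ∀ x, G x + c * Y x = 0
  · obtain ⟨c, hc⟩ := hdeg
    have hfH (x : Fin (2 * m) → Fˣ) : G x + H x * Y x = (H x - c) * Y x := by
      linear_combination hc x
    have hHc : (fun x => H x - c) ∈ multilinSpan F (amamBottom m) :=
      sub_mem hH (const_mem_multilinSpan c _)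
    have hHc0 : (fun x => H x - c) ≠ 0 := fun h0 => hf0 <| funext fun x => by
      show G x + H x * Y x = 0
      rw [hfH, show H x - c = 0 from congrFun h0 x, zero_mul]
    have := le_card_ne_zero_of_mem_multilinSpan hHc hHc0
    rw [card_amamBottom, hsub] at this
    refine this.trans_eq (Nat.card_congr (Equiv.subtypeEquivRight fun x => ?_))
    show H x - c ≠ 0 ↔ G x + H x * Y x ≠ 0
    rw [hfH, mul_ne_zero_iff, and_iff_left (hY0 x)]
  · push Not at hdeg
    have hGc (c : F) : (Fintype.card Fˣ - 1) ^ m * Fintype.card Fˣ ^ m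
        ≤ Nat.card {x // G x + c * Y x ≠ 0} := by
      have := le_card_ne_zero_of_mem_multilinSpan (add_mem hG (Submodule.smul_mem _ c hY))
        fun h0 => (hdeg c).elim fun x hx => hx (congrFun h0 x)
      rwa [card_compl_amamBottom, hsub] at this
    exact le_card_add_mul_ne_zero (by simpa using dependsOn_of_mem_multilinSpan hG)
      (by simpa using dependsOn_of_mem_multilinSpan hY) hGc hH

variable (m) in
lemma isLeast_toricWeights_amamLE (hk : 2 ≤ Fintype.card Fˣ) :
    IsLeast (toricWeights (Fin (2 * m)) (amamLE m) F)
      ((Fintype.card Fˣ - 1) ^ m * Fintype.card Fˣ ^ m) := by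
  have hcard := card_prod_sub_one_ne_zero (F := F) (amamBottom m)ᶜ
  rw [card_compl_amamBottom, Fintype.card_fin, show 2 * m - m = m by omega] at hcard
  refine ⟨⟨_, multilinSpan_compl_amamBottom_le F m (prod_sub_one_mem_multilinSpan _),
    fun h0 => ?_, hcard.symm⟩, fun _ ⟨g, hg, hg0, hw⟩ =>
      hw ▸ le_card_ne_zero_of_mem_monomialSpan_amamLE hg hg0⟩
  have hpos : 0 < (Fintype.card Fˣ - 1) ^ m * Fintype.card Fˣ ^ m :=
    Nat.mul_pos (Nat.pow_pos (by omega)) (Nat.pow_pos (by omega))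
  obtain ⟨⟨x, hx⟩⟩ := (Nat.card_pos_iff.mp (hcard ▸ hpos)).1
  exact hx (congrFun h0 x)

end OrdinalSumAntichains

theorem stmt9_general (q m : ℕ) (hq : 3 < q)
    (F : Type) [Field F] [Fintype F] (hF : Fintype.card F = q) :
    toricMinDist (Fin (2 * m)) (amamLE m) F = (q - 1) ^ m * (q - 2) ^ m := by
  classical
  have hk : Fintype.card Fˣ = q - 1 := by rw [Fintype.card_units, hF]
  rw [toricMinDist_eq_of_isLeast (isLeast_toricWeights_amamLE m (by omega)), hk, mul_comm,
    Nat.sub_sub]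

/-- Let `q > 3` be a prime power (realized as the cardinality of a finite
field `F`) and let `m` be a positive integer.  The minimum distance of the toric code of the
order polytope of `A_m ⊕ A_m` is `(q-1)^m * (q-2)^m`. -/
theorem stmt9 (q m : ℕ) (hq : 3 < q) (hm : 0 < m)
    (F : Type) [Field F] [Fintype F] (hF : Fintype.card F = q) :
    toricMinDist (Fin (2 * m)) (amamLE m) F = (q - 1) ^ m * (q - 2) ^ m :=
  stmt9_general q m hq F hF
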